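/- With the same hypotheses, for any measurement vector M ∈ ℝⁿ, the quantity R = Mᵀ (∫₀^∞ exp(Ls) σ²ζζᵀ exp(Ls) ds) M equals σ² Σ_{i=2}^n Σ_{j=2}^n (-1/(λ_i+λ_j)) (Mᵀv_i)(v_iᵀζ)(ζᵀv_j)(v_jᵀM), and R ≥ 0. -/

import Mathlib

/-!
Writing `E s = exp (s • L)`, which is symmetric, the integrand is `σ² (Mᵀ E s ζ)²`. Expanding `ζ`
in the eigenbasis gives `Mᵀ E s ζ = ∑ᵢ (vᵢᵀζ)(Mᵀvᵢ) e^{λᵢ s}`, where the `i = 0` term vanishes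
because `v₀ᵀζ = 0`. Squaring and integrating the exponentials `e^{(λᵢ+λⱼ)s}`, which decay since
`λᵢ + λⱼ < 0`, gives the double sum; `R ≥ 0` because the integrand is a square.
-/

open Matrix MeasureTheory

theorem integral_sum_mul_exp_mul_Ioi {ι : Type*} (S : Finset ι) (c a : ι → ℝ)
    (ha : ∀ i ∈ S, a i < 0) :
    ∫ s in Set.Ioi (0 : ℝ), ∑ i ∈ S, c i * Real.exp (a i * s) = ∑ i ∈ S, -1 / a i * c i := by
  rw [integral_finsetSum S fun i hi => (integrableOn_exp_mul_Ioi (ha i hi) 0).const_mul (c i)]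
  refine Finset.sum_congr rfl fun i hi => ?_
  rw [integral_const_mul, integral_exp_mul_Ioi (ha i hi), mul_zero, Real.exp_zero]
  ring

theorem integral_sq_sum_mul_exp_mul_Ioi {ι : Type*} (S : Finset ι) (c a : ι → ℝ)
    (ha : ∀ i ∈ S, a i < 0) :
    ∫ s in Set.Ioi (0 : ℝ), (∑ i ∈ S, c i * Real.exp (a i * s)) ^ 2
      = ∑ i ∈ S, ∑ j ∈ S, -1 / (a i + a j) * c i * c j := by
  have hsq : ∀ s, (∑ i ∈ S, c i * Real.exp (a i * s)) ^ 2
      = ∑ p ∈ S ×ˢ S, c p.1 * c p.2 * Real.exp ((a p.1 + a p.2) * s) := by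
    intro s
    rw [sq, Finset.sum_mul_sum, Finset.sum_product]
    refine Finset.sum_congr rfl fun i _ => Finset.sum_congr rfl fun j _ => ?_
    rw [add_mul, Real.exp_add]
    ring
  have hneg : ∀ p ∈ S ×ˢ S, a p.1 + a p.2 < 0 := fun p hp => by
    rw [Finset.mem_product] at hp
    linarith [ha _ hp.1, ha _ hp.2]
  simp_rw [hsq]
  rw [integral_sum_mul_exp_mul_Ioi _ _ _ hneg, Finset.sum_product]
  simp_rw [mul_assoc]

theorem Matrix.exp_mulVec_of_mulVec_eq_smul {m : Type*} [Fintype m] [DecidableEq m]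
    {A : Matrix m m ℝ} {w : m → ℝ} {μ : ℝ} (h : A *ᵥ w = μ • w) :
    NormedSpace.exp A *ᵥ w = Real.exp μ • w := by
  -- `NormedSpace.exp` only sees the topology; an algebra norm is needed for the series to converge.
  let _ : NormedRing (Matrix m m ℝ) := Matrix.linftyOpNormedRing
  let _ : NormedAlgebra ℝ (Matrix m m ℝ) := Matrix.linftyOpNormedAlgebra
  have hpow : ∀ k : ℕ, A ^ k *ᵥ w = μ ^ k • w := by
    intro k
    induction k with
    | zero => simp
    | succ k ih => rw [pow_succ', ← mulVec_mulVec, ih, mulVec_smul, h, smul_smul, ← pow_succ]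
  let applyTo : Matrix m m ℝ →+ (m → ℝ) := AddMonoidHom.mk' (· *ᵥ w) fun B C => add_mulVec B C w
  have hmat := (NormedSpace.exp_series_hasSum_exp' (𝕂 := ℝ) A).map applyTo
    (continuous_id.matrix_mulVec continuous_const)
  have hscalar := (NormedSpace.exp_series_hasSum_exp' (𝕂 := ℝ) μ).smul_const w
  rw [Real.exp_eq_exp_ℝ]
  refine hmat.unique ?_
  convert hscalar using 2 with k
  simp [applyTo, smul_mulVec, hpow, smul_smul]

theorem Matrix.sum_dotProduct_smul_of_orthonormal {m R : Type*} [Fintype m] [DecidableEq m]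
    [CommRing R] {v : m → m → R} (horth : ∀ i j, v i ⬝ᵥ v j = if i = j then 1 else 0)
    (x : m → R) : ∑ i, (v i ⬝ᵥ x) • v i = x := by
  have hrows : of v * (of v)ᵀ = 1 := by
    ext i j
    simp [mul_apply, one_apply, ← horth, dotProduct]
  have hcols : (of v)ᵀ * of v = 1 := mul_eq_one_comm.mp hrows
  calc ∑ i, (v i ⬝ᵥ x) • v i = (of v *ᵥ x) ᵥ* of v := by
        rw [vecMul_eq_sum]; rfl
    _ = ((of v)ᵀ * of v) *ᵥ x := by rw [← mulVec_mulVec, mulVec_transpose]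
    _ = x := by rw [hcols, one_mulVec]

theorem Matrix.dotProduct_mulVec_eq_sum_of_orthonormal_eigenvectors {m R : Type*} [Fintype m]
    [DecidableEq m] [CommRing R] {A : Matrix m m R} {v : m → m → R} {μ : m → R}
    (horth : ∀ i j, v i ⬝ᵥ v j = if i = j then 1 else 0) (heig : ∀ i, A *ᵥ v i = μ i • v i)
    (x y : m → R) : y ⬝ᵥ A *ᵥ x = ∑ i, (v i ⬝ᵥ x) * (y ⬝ᵥ v i) * μ i := by
  conv_lhs => rw [← sum_dotProduct_smul_of_orthonormal horth x]
  simp only [mulVec_sum, mulVec_smul, heig, dotProduct_sum, dotProduct_smul, smul_eq_mul]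
  exact Finset.sum_congr rfl fun i _ => by ring

theorem Matrix.dotProduct_mul_vecMulVec_mul_mulVec {m R : Type*} [Fintype m] [CommRing R]
    {A : Matrix m m R} (hA : A.IsSymm) (x y : m → R) :
    y ⬝ᵥ (A * vecMulVec x x * A) *ᵥ y = (y ⬝ᵥ A *ᵥ x) ^ 2 := by
  have hswap : x ⬝ᵥ A *ᵥ y = y ⬝ᵥ A *ᵥ x := by
    rw [dotProduct_mulVec, ← mulVec_transpose, hA.eq, dotProduct_comm]
  rw [mul_vecMulVec, ← mulVec_mulVec, vecMulVec_mulVec, hswap]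
  simp [sq]

theorem stmt_6_general (n : ℕ) [NeZero n] (L : Matrix (Fin n) (Fin n) ℝ) (hsym : L.IsSymm)
    (lam : Fin n → ℝ) (v : Fin n → Fin n → ℝ)
    (heig : ∀ i, L.mulVec (v i) = lam i • v i)
    (horth : ∀ i j, v i ⬝ᵥ v j = if i = j then 1 else 0)
    (hlamneg : ∀ i, i ≠ 0 → lam i < 0)
    (ζ : Fin n → ℝ) (hζ : v 0 ⬝ᵥ ζ = 0)
    (σ : ℝ) (M : Fin n → ℝ)
    (R : ℝ)
    (hR : R = ∫ s in Set.Ioi (0:ℝ),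
      M ⬝ᵥ ((NormedSpace.exp (s • L) * (σ ^ 2 • Matrix.vecMulVec ζ ζ) *
        NormedSpace.exp (s • L)).mulVec M)) :
    R = σ ^ 2 * ∑ i ∈ Finset.univ.filter (fun i : Fin n => i ≠ 0),
          ∑ j ∈ Finset.univ.filter (fun j : Fin n => j ≠ 0),
            (-1) / (lam i + lam j) * (M ⬝ᵥ v i) * (v i ⬝ᵥ ζ) * (ζ ⬝ᵥ v j) * (v j ⬝ᵥ M)
      ∧ 0 ≤ R := by
  set S := Finset.univ.filter (fun i : Fin n => i ≠ 0)
  set c : Fin n → ℝ := fun i => (v i ⬝ᵥ ζ) * (M ⬝ᵥ v i)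
  have hproj : ∀ s : ℝ, M ⬝ᵥ NormedSpace.exp (s • L) *ᵥ ζ
      = ∑ i ∈ S, c i * Real.exp (lam i * s) := fun s => by
    have heigExp : ∀ i, NormedSpace.exp (s • L) *ᵥ v i = Real.exp (lam i * s) • v i := fun i => by
      rw [exp_mulVec_of_mulVec_eq_smul (μ := lam i * s)]
      rw [smul_mulVec, heig, smul_smul, mul_comm]
    rw [dotProduct_mulVec_eq_sum_of_orthonormal_eigenvectors horth heigExp]
    refine (Finset.sum_filter_of_ne (p := (· ≠ 0)) fun i _ hi h0 => hi ?_).symm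
    simp [h0, hζ]
  have hintegrand : ∀ s : ℝ, M ⬝ᵥ ((NormedSpace.exp (s • L) * (σ ^ 2 • vecMulVec ζ ζ) *
      NormedSpace.exp (s • L)).mulVec M) = σ ^ 2 * (∑ i ∈ S, c i * Real.exp (lam i * s)) ^ 2 :=
    fun s => by
      rw [mul_smul_comm, smul_mul_assoc, smul_mulVec, dotProduct_smul,
        dotProduct_mul_vecMulVec_mul_mulVec ((hsym.smul s).exp), hproj, smul_eq_mul]
  simp_rw [hintegrand, integral_const_mul] at hR
  refine ⟨?_, hR ▸ mul_nonneg (sq_nonneg σ) (setIntegral_nonneg measurableSet_Ioi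
    fun s _ => sq_nonneg _)⟩
  rw [hR, integral_sq_sum_mul_exp_mul_Ioi S c lam fun i hi => hlamneg i (Finset.mem_filter.mp hi).2]
  congr 1
  refine Finset.sum_congr rfl fun i _ => Finset.sum_congr rfl fun j _ => ?_
  simp only [c, dotProduct_comm ζ (v j), dotProduct_comm (v j) M]
  ring

theorem stmt_6 (n : ℕ) [NeZero n] (L : Matrix (Fin n) (Fin n) ℝ) (hsym : L.IsSymm)
    (lam : Fin n → ℝ) (v : Fin n → Fin n → ℝ)
    (heig : ∀ i, L.mulVec (v i) = lam i • v i)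
    (horth : ∀ i j, v i ⬝ᵥ v j = if i = j then 1 else 0)
    (hlam0 : lam 0 = 0) (hlamneg : ∀ i, i ≠ 0 → lam i < 0)
    (ζ : Fin n → ℝ) (hζ : v 0 ⬝ᵥ ζ = 0)
    (σ : ℝ) (M : Fin n → ℝ)
    (R : ℝ)
    (hR : R = ∫ s in Set.Ioi (0:ℝ),
      M ⬝ᵥ ((NormedSpace.exp (s • L) * (σ ^ 2 • Matrix.vecMulVec ζ ζ) *
        NormedSpace.exp (s • L)).mulVec M)) :
    R = σ ^ 2 * ∑ i ∈ Finset.univ.filter (fun i : Fin n => i ≠ 0),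
          ∑ j ∈ Finset.univ.filter (fun j : Fin n => j ≠ 0),
            (-1) / (lam i + lam j) * (M ⬝ᵥ v i) * (v i ⬝ᵥ ζ) * (ζ ⬝ᵥ v j) * (v j ⬝ᵥ M)
      ∧ 0 ≤ R :=
  stmt_6_general n L hsym lam v heig horth hlamneg ζ hζ σ M R hR
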